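/- Let 𝓛 be a nonempty convex subset of a Coxeter group W, let u ∈ W, let i ∈ I, and let β be a transmitting root of the stratum Str(Sep(u)). If B(uβ, α_i) < 0, then τ_i(u) = s_i u. -/

import Mathlib

open scoped Classical

noncomputable section

namespace BKBilliards

variable {I : Type*} [Fintype I] [DecidableEq I]
variable {M : CoxeterMatrix I} {W : Type*} [Group W]

/-- The simple root indexed by `i`, i.e. the `i`-th standard basis vector of `ℝ^I`. -/
def sroot (i : I) : I → ℝ := Pi.single i 1

/-- The data `(ρ, B)` constitutes the standard geometric representation of the Coxeter
system `cs`, together with its induced symmetric bilinear form (with `μ = 1` on all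
pairs whose Coxeter matrix entry is `∞`, encoded as `0`). -/
structure IsGeometric (cs : CoxeterSystem M W) (ρ : Representation ℝ W (I → ℝ))
    (B : LinearMap.BilinForm ℝ (I → ℝ)) : Prop where
  /-- `B(αᵢ, αᵢ') = -cos (π / m i i')` when `m i i' ≠ ∞`. -/
  form_apply_of_ne_zero : ∀ i i' : I, M i i' ≠ 0 →
    B (sroot i) (sroot i') = - Real.cos (Real.pi / (M i i' : ℝ))
  /-- `B(αᵢ, αᵢ') = -1` when `m i i' = ∞` (encoded as `0`). -/
  form_apply_of_eq_zero : ∀ i i' : I, M i i' = 0 → B (sroot i) (sroot i') = -1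
  /-- Each simple reflection acts by the reflection formula. -/
  simple_apply : ∀ (i : I) (v : I → ℝ), ρ (cs.simple i) v = v - (2 * B v (sroot i)) • sroot i

variable (ρ : Representation ℝ W (I → ℝ))

/-- The root system `Φ = {w αᵢ : w ∈ W, i ∈ I}`. -/
def Phi : Set (I → ℝ) := {v | ∃ (w : W) (i : I), v = ρ w (sroot i)}

/-- The half-space `H_β⁺ = {w ∈ W : w β ∈ Φ⁺}`: for a root `β`, membership amounts to
`w β` being a nonnegative combination of the simple roots. -/
def Hplus (β : I → ℝ) : Set W := {w : W | 0 ≤ ρ w β}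

/-- `R(𝓛) = {β ∈ Φ : 𝓛 ⊆ H_β⁺}`. -/
def RL (L : Set W) : Set (I → ℝ) := {β | β ∈ Phi ρ ∧ ∀ w ∈ L, w ∈ Hplus ρ β}

/-- `𝓛` is convex if it equals the intersection of all half-spaces containing it. -/
def IsConvex (L : Set W) : Prop := ∀ u : W, (∀ β ∈ RL ρ L, u ∈ Hplus ρ β) → u ∈ L

/-- The set of separators of `u`: `Sep(u) = {β ∈ R(𝓛) : u β ∈ Φ⁻}`. -/
def Sep (L : Set W) (u : W) : Set (I → ℝ) := {β | β ∈ RL ρ L ∧ ρ u β ≤ 0}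

variable (cs : CoxeterSystem M W)

/-- The noninvertible Bender–Knuth toggle `τᵢ` associated to the convex set `𝓛`. -/
def toggle (L : Set W) (i : I) (u : W) : W :=
  if ρ u⁻¹ (sroot i) ∈ RL ρ L then u else cs.simple i * u

/-- For a word `𝗐 = i_M ⋯ i_1` (a list whose head is `i_M`), the composition
`τ_𝗐 = τ_{i_M} ⋯ τ_{i_1}`. -/
def toggleWord (L : Set W) (l : List I) (u : W) : W :=
  l.foldr (fun i v => toggle ρ cs L i v) u

/-- `β` dominates `β'` if `H_β⁺ ⊇ H_{β'}⁺`. -/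
def Dominates (β β' : I → ℝ) : Prop := Hplus ρ β' ⊆ Hplus ρ β

/-- A small root: a positive root dominating no positive root other than itself. -/
def IsSmall (β : I → ℝ) : Prop :=
  β ∈ Phi ρ ∧ 0 ≤ β ∧ ∀ β', β' ∈ Phi ρ → 0 ≤ β' → Dominates ρ β β' → β' = β

/-- `β` is a transmitting root of the stratum `Str(R)`:
`β ∈ R(𝓛)` and `β = -w⁻¹ αᵢ` for some `w` with `Sep(w) = R` and some `i ∈ I`. -/
def IsTransmitting (L : Set W) (R : Set (I → ℝ)) (β : I → ℝ) : Prop :=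
  β ∈ RL ρ L ∧ ∃ (w : W) (i : I), Sep ρ L w = R ∧ β = - ρ w⁻¹ (sroot i)

end BKBilliards

/-!
Suppose instead that `τᵢ(u) = u`, i.e. `γ = u⁻¹αᵢ ∈ R(𝓛)`, and write `β = -w⁻¹αⱼ` with
`Sep(w) = Sep(u)`. The reflection `u⁻¹sᵢu` sends `β` to `δ = β + cγ` with `c = -2B(uβ, αᵢ) > 0`,
so `δ ∈ R(𝓛)` as well. Every root is positive or negative, by Humphreys' dihedral reduction: the
coefficients of an alternating word in `sᵢ, sⱼ` applied to `αᵢ` are Chebyshev values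
`Uₖ(cos(π/m))` (or `k + 1` when `m = ∞`), nonnegative as long as the word is shorter than `m`.
If `uδ = sᵢ(uβ)` is positive, then `uβ = -αᵢ`, the only negative root that `sᵢ` makes positive.
If it is negative, `δ` separates `u`, hence `w`, while `γ` does not; then `wδ = -αⱼ + c·wγ ≤ 0`
with `wγ` positive forces `wγ = αⱼ`. Either way `β = -γ`, which is impossible for two elements of
`R(𝓛)` when `𝓛` is nonempty.
-/

open Polynomial Polynomial.Chebyshev CoxeterSystem

namespace Polynomial.Chebyshev

theorem U_eval_cos_pi_div_nonneg {m : ℕ} (hm : 2 ≤ m) {n : ℤ} (h₁ : -1 ≤ n)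
    (h₂ : n < m) : 0 ≤ (U ℝ n).eval (Real.cos (Real.pi / m)) := by
  have hm' : (2 : ℝ) ≤ m := by exact_mod_cast hm
  have hn' : (n : ℝ) + 1 ≤ m := by exact_mod_cast h₂
  have hsin : 0 < Real.sin (Real.pi / m) :=
    Real.sin_pos_of_pos_of_lt_pi (by positivity) (div_lt_self Real.pi_pos (by linarith))
  have hprod : 0 ≤ (U ℝ n).eval (Real.cos (Real.pi / m)) * Real.sin (Real.pi / m) := by
    rw [U_real_cos]
    apply Real.sin_nonneg_of_nonneg_of_le_pi
    · have : (0 : ℝ) ≤ n + 1 := by exact_mod_cast (by omega : (0 : ℤ) ≤ n + 1)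
      positivity
    · rw [mul_div_assoc', div_le_iff₀ (by positivity)]
      nlinarith [Real.pi_pos]
  exact (mul_nonneg_iff_of_pos_right hsin).1 hprod

end Polynomial.Chebyshev

namespace CoxeterSystem

variable {I : Type*} {M : CoxeterMatrix I} {W : Type*} [Group W] (cs : CoxeterSystem M W)

theorem wordProd_alternatingWord_succ_inv (i j : I) (t : ℕ) :
    (cs.wordProd (alternatingWord i j (t + 1)))⁻¹ =
      (cs.wordProd (alternatingWord i j t))⁻¹ * cs.simple (if Even t then j else i) := by
  rw [alternatingWord_succ', wordProd_cons, mul_inv_rev, inv_simple]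

theorem isRightDescent_of_length_add_braidWord {w v : W} {i j : I} (hm : M i j ≠ 0)
    (hw : w = v * cs.wordProd (braidWord M i j)) (hlen : cs.length v + M i j = cs.length w) :
    cs.IsRightDescent w i := by
  obtain ⟨m, hm'⟩ := Nat.exists_eq_succ_of_ne_zero hm
  have hbraid :
      cs.wordProd (braidWord M i j) = cs.wordProd (alternatingWord i j m) * cs.simple i := by
    rw [cs.wordProd_braidWord_eq, braidWord, M.symmetric j i, hm', alternatingWord_succ,
      wordProd_concat]
  have hws : w * cs.simple i = v * cs.wordProd (alternatingWord i j m) := by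
    rw [hw, hbraid, mul_assoc, simple_mul_simple_cancel_right]
  have hle : cs.length (w * cs.simple i) ≤ cs.length v + m := by
    rw [hws]
    calc _ ≤ cs.length v + cs.length (cs.wordProd (alternatingWord i j m)) := cs.length_mul_le _ _
      _ ≤ cs.length v + m := by
        gcongr
        simpa using cs.length_wordProd_le (alternatingWord i j m)
  unfold IsRightDescent
  omega

theorem exists_eq_mul_wordProd_alternatingWord {w : W} {i j : I}
    (hi : cs.length w < cs.length (w * cs.simple i)) (hj : cs.IsRightDescent w j) :
    ∃ (v : W) (k : ℕ), w = v * cs.wordProd (alternatingWord i j k) ∧ cs.length v < cs.length w ∧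
      cs.length v < cs.length (v * cs.simple i) ∧ cs.length v < cs.length (v * cs.simple j) ∧
      (M i j = 0 ∨ k < M i j) := by
  set f : ℕ → W := fun t => w * (cs.wordProd (alternatingWord i j t))⁻¹ with hf
  have hf_succ (t : ℕ) : f (t + 1) = f t * cs.simple (if Even t then j else i) := by
    simp only [hf, wordProd_alternatingWord_succ_inv, mul_assoc]
  -- peel alternating letters `j, i, j, …` off the right of `w` for as long as the length drops
  obtain ⟨k, hstop, hred⟩ : ∃ k, cs.length (f (k + 1)) + (k + 1) ≠ cs.length w ∧
      ∀ t ≤ k, cs.length (f t) + t = cs.length w := by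
    have hex : ∃ t, cs.length (f (t + 1)) + (t + 1) ≠ cs.length w := ⟨cs.length w, by omega⟩
    refine ⟨Nat.find hex, Nat.find_spec hex, ?_⟩
    rintro (_ | t) ht
    · simp [hf, alternatingWord]
    · exact not_not.1 (Nat.find_min hex (by omega))
  have hk : k ≠ 0 := by
    rintro rfl
    have hf1 : f 1 = w * cs.simple j := by simp [hf, alternatingWord]
    unfold IsRightDescent at hj
    rcases cs.length_mul_simple w j with h | h <;> rw [hf1] at hstop <;> omega
  have hnext : cs.length (f k) < cs.length (f k * cs.simple (if Even k then j else i)) := by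
    rw [hf_succ] at hstop
    have := hred k le_rfl
    rcases cs.length_mul_simple (f k) (if Even k then j else i) with h | h <;> omega
  have hprev : cs.length (f k) < cs.length (f k * cs.simple (if Even (k - 1) then j else i)) := by
    obtain ⟨t, rfl⟩ : ∃ t, k = t + 1 := ⟨k - 1, by omega⟩
    have hback : f (t + 1) * cs.simple (if Even t then j else i) = f t := by
      rw [hf_succ, simple_mul_simple_cancel_right]
    rw [Nat.add_sub_cancel, hback]
    have := hred t (by omega)
    have := hred (t + 1) le_rfl
    omega
  have hbound : M i j = 0 ∨ k < M i j := by
    by_contra! h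
    refine Nat.lt_asymm hi (cs.isRightDescent_of_length_add_braidWord h.1 (v := f (M i j)) ?_ ?_)
    · simp [hf]
    · exact hred _ h.2
  have hpar : Even (k - 1) ↔ ¬Even k := by
    rw [Nat.even_sub (by omega)]
    simp
  refine ⟨f k, k, by simp [hf], by have := hred k le_rfl; omega, ?_, ?_, hbound⟩ <;>
    split_ifs at hnext hprev <;> first | assumption | tauto

end CoxeterSystem

namespace BKBilliards

variable {I : Type*} [DecidableEq I] {M : CoxeterMatrix I} {W : Type*} [Group W]
  {cs : CoxeterSystem M W} {ρ : Representation ℝ W (I → ℝ)} {B : LinearMap.BilinForm ℝ (I → ℝ)}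

theorem sroot_nonneg (i : I) : 0 ≤ sroot i := Pi.single_nonneg.2 zero_le_one

theorem sroot_ne_zero (i : I) : sroot i ≠ 0 := Pi.single_ne_zero_iff.2 one_ne_zero

theorem sroot_not_nonpos (i : I) : ¬ sroot i ≤ 0 := fun h =>
  sroot_ne_zero i (le_antisymm h (sroot_nonneg i))

theorem IsTransmitting.mem {L : Set W} {R : Set (I → ℝ)} {β : I → ℝ}
    (hβ : IsTransmitting ρ L R β) : β ∈ R := by
  obtain ⟨hβR, w, j, rfl, rfl⟩ := hβ
  refine ⟨hβR, ?_⟩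
  rw [map_neg, ρ.self_inv_apply, neg_nonpos]
  exact sroot_nonneg j

theorem map_mem_Phi {β : I → ℝ} (g : W) (hβ : β ∈ Phi ρ) : ρ g β ∈ Phi ρ := by
  obtain ⟨w, i, rfl⟩ := hβ
  exact ⟨g * w, i, by rw [map_mul, Module.End.mul_apply]⟩

theorem ne_zero_of_mem_Phi {β : I → ℝ} (hβ : β ∈ Phi ρ) : β ≠ 0 := by
  obtain ⟨w, i, rfl⟩ := hβ
  exact (map_ne_zero_iff _ (ρ.apply_bijective w).injective).2 (sroot_ne_zero i)

theorem neg_notMem_RL {L : Set W} {β : I → ℝ} (hL : L.Nonempty) (hβ : β ∈ RL ρ L) :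
    -β ∉ RL ρ L := by
  intro hβ'
  obtain ⟨v, hv⟩ := hL
  have hnonpos : 0 ≤ ρ v (-β) := hβ'.2 v hv
  rw [map_neg, neg_nonneg] at hnonpos
  have hzero : ρ v β = 0 := le_antisymm hnonpos (hβ.2 v hv)
  exact ne_zero_of_mem_Phi hβ.1 ((map_eq_zero_iff _ (ρ.apply_bijective v).injective).1 hzero)

theorem add_smul_mem_RL {L : Set W} {β γ : I → ℝ} {c : ℝ} (hβ : β ∈ RL ρ L) (hγ : γ ∈ RL ρ L)
    (hc : 0 ≤ c) (hΦ : β + c • γ ∈ Phi ρ) : β + c • γ ∈ RL ρ L := by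
  refine ⟨hΦ, fun v hv => ?_⟩
  change 0 ≤ ρ v (β + c • γ)
  rw [map_add, map_smul]
  exact add_nonneg (hβ.2 v hv) (smul_nonneg hc (hγ.2 v hv))

theorem eq_smul_sroot_of_nonneg_of_le {x : I → ℝ} {c : ℝ} {i : I} (h₀ : 0 ≤ x)
    (h : x ≤ c • sroot i) : x = x i • sroot i := by
  funext k
  rcases eq_or_ne k i with rfl | hk
  · simp [sroot]
  · have hk₁ := h k
    have hk₀ := h₀ k
    simp only [sroot, Pi.smul_apply, Pi.single_eq_of_ne hk, smul_zero, Pi.zero_apply] at hk₁ hk₀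
    simp [sroot, Pi.single_eq_of_ne hk, le_antisymm hk₁ hk₀]

namespace IsGeometric

variable (hg : IsGeometric cs ρ B)
include hg

theorem form_sroot_self (i : I) : B (sroot i) (sroot i) = 1 := by
  simp [hg.form_apply_of_ne_zero i i (by simp)]

theorem form_sroot_comm (i j : I) : B (sroot i) (sroot j) = B (sroot j) (sroot i) := by
  rcases eq_or_ne (M i j) 0 with h | h
  · rw [hg.form_apply_of_eq_zero i j h, hg.form_apply_of_eq_zero j i (by rwa [M.symmetric])]
  · rw [hg.form_apply_of_ne_zero i j h, hg.form_apply_of_ne_zero j i (by rwa [M.symmetric]),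
      M.symmetric]

theorem form_comm [Finite I] (x y : I → ℝ) : B x y = B y x := by
  have hflip : B = B.flip := LinearMap.BilinForm.ext_basis (Pi.basisFun ℝ I) fun i j => by
    rw [Pi.basisFun_apply, Pi.basisFun_apply]
    exact hg.form_sroot_comm i j
  exact congrArg (fun F : LinearMap.BilinForm ℝ (I → ℝ) => F x y) hflip

theorem simple_apply_sroot_self (i : I) : ρ (cs.simple i) (sroot i) = -sroot i := by
  rw [hg.simple_apply, hg.form_sroot_self]
  module

theorem form_map_map [Finite I] (g : W) (x y : I → ℝ) : B (ρ g x) (ρ g y) = B x y := by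
  induction g using cs.simple_induction generalizing x y with
  | simple i =>
    simp only [hg.simple_apply, map_sub, map_smul, LinearMap.sub_apply, LinearMap.smul_apply,
      smul_eq_mul, hg.form_sroot_self, hg.form_comm y (sroot i)]
    ring
  | one => simp
  | mul g h ihg ihh => simp only [map_mul, Module.End.mul_apply, ihg, ihh]

theorem form_self_of_mem_Phi [Finite I] {β : I → ℝ} (hβ : β ∈ Phi ρ) : B β β = 1 := by
  obtain ⟨w, i, rfl⟩ := hβ
  rw [hg.form_map_map, hg.form_sroot_self]

theorem eq_sroot_of_nonneg_of_le {x : I → ℝ} {c : ℝ} {i : I} (hx : B x x = 1) (h₀ : 0 ≤ x)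
    (h : x ≤ c • sroot i) : x = sroot i := by
  obtain ⟨t, rfl⟩ : ∃ t : ℝ, x = t • sroot i := ⟨_, eq_smul_sroot_of_nonneg_of_le h₀ h⟩
  have ht₀ : 0 ≤ t := by simpa [sroot] using h₀ i
  have ht : t * t = 1 := by simpa [hg.form_sroot_self] using hx
  rw [show t = 1 by nlinarith, one_smul]

theorem U_eval_neg_form_nonneg {i j : I} (hij : i ≠ j) {n : ℤ} (h₁ : -1 ≤ n)
    (h₂ : M i j = 0 ∨ n < M i j) : 0 ≤ (U ℝ n).eval (-B (sroot i) (sroot j)) := by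
  by_cases hm : M i j = 0
  · rw [hg.form_apply_of_eq_zero i j hm, neg_neg, U_eval_one]
    exact_mod_cast (by omega : (0 : ℤ) ≤ n + 1)
  · rw [hg.form_apply_of_ne_zero i j hm, neg_neg]
    have := M.off_diagonal i j hij
    exact U_eval_cos_pi_div_nonneg (by omega) h₁ (h₂.resolve_left hm)

theorem wordProd_alternatingWord_apply_sroot (i j : I) (k : ℕ) :
    ρ (cs.wordProd (alternatingWord i j k)) (sroot i) =
      (U ℝ (if Even k then k else k - 1)).eval (-B (sroot i) (sroot j)) • sroot i +
      (U ℝ (if Even k then k - 1 else k)).eval (-B (sroot i) (sroot j)) • sroot j := by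
  set μ := -B (sroot i) (sroot j)
  have hsj : ρ (cs.simple j) (sroot i) = sroot i + (2 * μ) • sroot j := by
    rw [hg.simple_apply]; module
  have hsi : ρ (cs.simple i) (sroot j) = sroot j + (2 * μ) • sroot i := by
    rw [hg.simple_apply, hg.form_sroot_comm]; module
  induction k with
  | zero => simp [alternatingWord]
  | succ k ih =>
    rw [alternatingWord_succ', cs.wordProd_cons, map_mul, Module.End.mul_apply, ih]
    rcases Nat.even_or_odd k with hk | hk
    · have hk' : ¬Even (k + 1) := by simpa [Nat.even_add_one] using hk
      simp only [hk, hk', if_true, if_false, map_add, map_smul, hsj,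
        hg.simple_apply_sroot_self, Nat.cast_add, Nat.cast_one, add_sub_cancel_right, U_add_one,
        eval_sub, eval_mul, eval_X, eval_ofNat]
      module
    · have hk' : Even (k + 1) := by simpa [Nat.even_add_one] using hk
      have hk'' : ¬Even k := Nat.not_even_iff_odd.2 hk
      simp only [hk', hk'', if_true, if_false, map_add, map_smul, hsi,
        hg.simple_apply_sroot_self, Nat.cast_add, Nat.cast_one, add_sub_cancel_right, U_add_one,
        eval_sub, eval_mul, eval_X, eval_ofNat]
      module

theorem exists_wordProd_alternatingWord_apply_sroot_eq {i j : I} (hij : i ≠ j) {k : ℕ}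
    (hk : M i j = 0 ∨ k < M i j) :
    ∃ a b : ℝ, 0 ≤ a ∧ 0 ≤ b ∧
      ρ (cs.wordProd (alternatingWord i j k)) (sroot i) = a • sroot i + b • sroot j := by
  have hk' : M i j = 0 ∨ (k : ℤ) < M i j := by exact_mod_cast hk
  refine ⟨_, _, ?_, ?_, hg.wordProd_alternatingWord_apply_sroot i j k⟩ <;>
    refine hg.U_eval_neg_form_nonneg hij ?_ ?_ <;> split_ifs <;> omega

theorem sroot_nonneg_of_length_lt {w : W} {i : I}
    (h : cs.length w < cs.length (w * cs.simple i)) : 0 ≤ ρ w (sroot i) := by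
  induction hn : cs.length w using Nat.strong_induction_on generalizing w i with
  | _ n ih =>
  rcases eq_or_ne w 1 with rfl | hw
  · simpa using sroot_nonneg i
  obtain ⟨j, hj⟩ := cs.exists_rightDescent_of_ne_one hw
  have hij : i ≠ j := by
    rintro rfl
    exact lt_asymm h hj
  obtain ⟨v, k, rfl, hv, hvi, hvj, hk⟩ := cs.exists_eq_mul_wordProd_alternatingWord h hj
  obtain ⟨a, b, ha, hb, hab⟩ := hg.exists_wordProd_alternatingWord_apply_sroot_eq hij hk
  rw [map_mul, Module.End.mul_apply, hab, map_add, map_smul, map_smul]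
  exact add_nonneg (smul_nonneg ha (ih _ (hn ▸ hv) hvi rfl))
    (smul_nonneg hb (ih _ (hn ▸ hv) hvj rfl))

theorem nonneg_or_nonpos_of_mem_Phi {β : I → ℝ} (hβ : β ∈ Phi ρ) : 0 ≤ β ∨ β ≤ 0 := by
  obtain ⟨w, i, rfl⟩ := hβ
  rcases cs.length_mul_simple w i with h | h
  · exact Or.inl (hg.sroot_nonneg_of_length_lt (by omega))
  · have hasc : cs.length (w * cs.simple i) < cs.length (w * cs.simple i * cs.simple i) := by
      rw [CoxeterSystem.simple_mul_simple_cancel_right]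
      omega
    have := hg.sroot_nonneg_of_length_lt hasc
    rw [map_mul, Module.End.mul_apply, hg.simple_apply_sroot_self, map_neg, neg_nonneg] at this
    exact Or.inr this

theorem eq_neg_sroot_of_nonpos_of_simple_apply_nonneg [Finite I] {β : I → ℝ} {i : I}
    (hβ : β ∈ Phi ρ) (hβ₀ : β ≤ 0) (hsβ : 0 ≤ ρ (cs.simple i) β) : β = -sroot i := by
  rw [hg.simple_apply, sub_nonneg] at hsβ
  rw [← neg_neg β, hg.eq_sroot_of_nonneg_of_le (c := -(2 * B β (sroot i)))
    (by simpa using hg.form_self_of_mem_Phi hβ) (neg_nonneg.2 hβ₀)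
    (by rw [neg_smul]; exact neg_le_neg hsβ)]

theorem eq_sroot_of_neg_sroot_add_smul_nonpos [Finite I] {x : I → ℝ} {c : ℝ} {j : I}
    (hx : x ∈ Phi ρ) (hx₀ : ¬x ≤ 0) (hc : 0 < c) (h : -sroot j + c • x ≤ 0) : x = sroot j := by
  rw [neg_add_nonpos_iff, ← le_inv_smul_iff_of_pos hc] at h
  exact hg.eq_sroot_of_nonneg_of_le (hg.form_self_of_mem_Phi hx)
    ((hg.nonneg_or_nonpos_of_mem_Phi hx).resolve_right hx₀) h

theorem conj_simple_apply (u : W) (i : I) (β : I → ℝ) :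
    ρ (u⁻¹ * cs.simple i * u) β = β + (-(2 * B (ρ u β) (sroot i))) • ρ u⁻¹ (sroot i) := by
  rw [map_mul, map_mul, Module.End.mul_apply, Module.End.mul_apply, hg.simple_apply, map_sub,
    map_smul, ρ.inv_self_apply, neg_smul, sub_eq_add_neg]

theorem conj_simple_apply_mem_RL {L : Set W} {u : W} {i : I} {β : I → ℝ} (hβ : β ∈ RL ρ L)
    (hγ : ρ u⁻¹ (sroot i) ∈ RL ρ L) (hB : B (ρ u β) (sroot i) ≤ 0) :
    ρ (u⁻¹ * cs.simple i * u) β ∈ RL ρ L := by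
  have hδ := hg.conj_simple_apply u i β
  rw [hδ]
  exact add_smul_mem_RL hβ hγ (by linarith) (hδ ▸ map_mem_Phi _ hβ.1)

end IsGeometric

end BKBilliards

open BKBilliards

theorem toggle_of_form_neg_general
    {I : Type*} [Fintype I] [DecidableEq I] {M : CoxeterMatrix I} {W : Type*} [Group W]
    (cs : CoxeterSystem M W) (ρ : Representation ℝ W (I → ℝ))
    (B : LinearMap.BilinForm ℝ (I → ℝ)) (hgeom : IsGeometric cs ρ B)
    (L : Set W) (hL : L.Nonempty)
    (u : W) (i : I) (β : I → ℝ)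
    (hβ : IsTransmitting ρ L (Sep ρ L u) β)
    (hB : B (ρ u β) (sroot i) < 0) :
    toggle ρ cs L i u = cs.simple i * u := by
  have huβ : ρ u β ≤ 0 := hβ.mem.2
  obtain ⟨hβR, w, j, hSep, hβw⟩ := hβ
  rw [toggle, if_neg]
  intro hγR
  set γ := ρ u⁻¹ (sroot i)
  set δ := ρ (u⁻¹ * cs.simple i * u) β
  have hδR : δ ∈ RL ρ L := hgeom.conj_simple_apply_mem_RL hβR hγR hB.le
  suffices hβγ : β = -γ from neg_notMem_RL hL hγR (hβγ ▸ hβR)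
  rcases hgeom.nonneg_or_nonpos_of_mem_Phi (map_mem_Phi u hδR.1) with hpos | hneg
  · have hsuβ : 0 ≤ ρ (cs.simple i) (ρ u β) := by
      simpa [δ, ← Module.End.mul_apply, ← map_mul, mul_assoc] using hpos
    rw [← ρ.inv_self_apply u β,
      hgeom.eq_neg_sroot_of_nonpos_of_simple_apply_nonneg (map_mem_Phi u hβR.1) huβ hsuβ, map_neg]
  · have hδw : ρ w δ ≤ 0 := ((Set.ext_iff.1 hSep δ).2 ⟨hδR, hneg⟩).2
    have hγw : ¬ρ w γ ≤ 0 := fun h =>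
      sroot_not_nonpos i (by simpa [γ] using ((Set.ext_iff.1 hSep γ).1 ⟨hγR, h⟩).2)
    have hwβ : ρ w β = -sroot j := by rw [hβw, map_neg, ρ.self_inv_apply]
    rw [show δ = β + _ • γ from hgeom.conj_simple_apply u i β, map_add, map_smul, hwβ] at hδw
    have hwγ := hgeom.eq_sroot_of_neg_sroot_add_smul_nonpos (map_mem_Phi w hγR.1) hγw
      (by linarith) hδw
    rw [hβw, ← hwγ, ρ.inv_self_apply]

/-- If `β` is a transmitting root of `Str(Sep(u))` and `B(uβ, αᵢ) < 0`,
then `τᵢ(u) = sᵢ u`. -/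
theorem toggle_of_form_neg
    {I : Type*} [Fintype I] [DecidableEq I] {M : CoxeterMatrix I} {W : Type*} [Group W]
    (cs : CoxeterSystem M W) (ρ : Representation ℝ W (I → ℝ))
    (B : LinearMap.BilinForm ℝ (I → ℝ)) (hgeom : IsGeometric cs ρ B)
    (L : Set W) (hL : L.Nonempty) (hconv : IsConvex ρ L)
    (u : W) (i : I) (β : I → ℝ)
    (hβ : IsTransmitting ρ L (Sep ρ L u) β)
    (hB : B (ρ u β) (sroot i) < 0) :
    toggle ρ cs L i u = cs.simple i * u :=
  toggle_of_form_neg_general cs ρ B hgeom L hL u i β hβ hB
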